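/- Let P : {1,…,n} → {1,…,n'} be a block map, w_i > 0, Π = {x ∈ ℝⁿ : w_j x_i = w_i x_j whenever P(i) = P(j)}, π the orthogonal projection onto Π, and e_{[r]} = π(e_i)/w_i the block basis of Π. Then for any λ = Σ λ_i e_i ∈ ℝⁿ, writing π(λ) = Σ_r λ'_{[r]} e_{[r]}, one has λ'_{[r]} = Σ_{j : P(j) = [r]} w_j λ_j. -/

import Mathlib

/-!
For `i` and `j` in the same block, every `z ∈ Π` satisfies `w j * z i = w i * z j`, so
`w j • e i - w i • e j` lies in `Πᗮ` and `w j • π (e i) = w i • π (e j)`. Hence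
`π (e i) = w i • e_[B i]`, and expanding `λ = ∑ i, λ i • e i` and grouping the terms by
block gives the coordinates.
-/

open Finset

theorem Finset.sum_smul_comp_eq_sum_fiberwise {R ι κ M : Type*} [Semiring R] [AddCommMonoid M]
    [Module R M] [Fintype κ] [DecidableEq κ] (s : Finset ι) (g : ι → κ) (c : ι → R) (v : κ → M) :
    ∑ i ∈ s, c i • v (g i) = ∑ j, (∑ i ∈ s with g i = j, c i) • v j := by
  simp_rw [Finset.sum_smul]
  rw [← Finset.sum_fiberwise s g]
  exact sum_congr rfl fun j _ => sum_congr rfl fun i hi => by rw [(mem_filter.1 hi).2]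

theorem EuclideanSpace.smul_orthogonalProjectionOnto_single_eq {ι : Type*} [Fintype ι]
    [DecidableEq ι] (K : Submodule ℝ (EuclideanSpace ℝ ι)) {i j : ι} {a b : ℝ}
    (h : ∀ z ∈ K, a * z i = b * z j) :
    a • K.orthogonalProjectionOnto (EuclideanSpace.single i 1) =
      b • K.orthogonalProjectionOnto (EuclideanSpace.single j 1) := by
  rw [← map_smul, ← map_smul, ← sub_eq_zero, ← map_sub]
  refine Submodule.orthogonalProjectionOnto_apply_of_mem_orthogonal ?_
  rw [Submodule.mem_orthogonal']
  intro z hz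
  simp [inner_sub_left, inner_smul_left, EuclideanSpace.inner_single_left, h z hz]

/-- Proposition 4.3(b): in the block basis `e_[r] = π(e_{σ r})/w_{σ r}`
of the folding plane Π, the coordinates of the orthogonal projection of
`λ = Σ λ_i e_i` are `λ'_[r] = Σ_{j : B j = r} w_j λ_j`. -/
theorem folding_plane_projection_coordinates
    (n n' : ℕ) (B : Fin n → Fin n') (σ : Fin n' → Fin n)
    (hσ : ∀ r, B (σ r) = r)
    (w : Fin n → ℝ) (hw : ∀ i, 0 < w i)
    (Pl : Submodule ℝ (EuclideanSpace ℝ (Fin n)))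
    (hPl : (Pl : Set (EuclideanSpace ℝ (Fin n))) =
      {x | ∀ i j, B i = B j → w j * x i = w i * x j})
    (x : EuclideanSpace ℝ (Fin n)) :
    Submodule.orthogonalProjectionOnto Pl x =
      ∑ r : Fin n',
        (∑ j ∈ Finset.univ.filter (fun j => B j = r), w j * x j) •
          ((w (σ r))⁻¹ • Submodule.orthogonalProjectionOnto Pl (EuclideanSpace.single (σ r) (1:ℝ))) := by
  set π := Pl.orthogonalProjectionOnto
  have hsingle : ∀ i, π (EuclideanSpace.single i 1) =
      w i • (w (σ (B i)))⁻¹ • π (EuclideanSpace.single (σ (B i)) 1) := by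
    intro i
    rw [smul_comm, eq_inv_smul_iff₀ (hw _).ne']
    refine EuclideanSpace.smul_orthogonalProjectionOnto_single_eq Pl fun z hz => ?_
    rw [← SetLike.mem_coe, hPl] at hz
    exact hz _ _ (hσ _).symm
  calc π x = ∑ i, x i • π (EuclideanSpace.single i 1) := by
        conv_lhs => rw [← (EuclideanSpace.basisFun (Fin n) ℝ).sum_repr x]
        simp only [EuclideanSpace.basisFun_apply, EuclideanSpace.basisFun_repr, map_sum, map_smul]
    _ = ∑ i, (w i * x i) • (w (σ (B i)))⁻¹ • π (EuclideanSpace.single (σ (B i)) 1) := by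
        refine sum_congr rfl fun i _ => ?_
        rw [hsingle, smul_smul, mul_comm]
    _ = _ := Finset.sum_smul_comp_eq_sum_fiberwise _ B _
        fun r => (w (σ r))⁻¹ • π (EuclideanSpace.single (σ r) 1)
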